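/- Let L : ℝ^n × ℝ^{m·k} → ℝ be smooth with Legendre transformation Leg(q, y) = (q^i, ∂L/∂y^α_A(q, y)) a C^∞ diffeomorphism, let ρ^i_α, C^γ_{αβ} : ℝ^n → ℝ be structure functions, and set H = E_L ∘ Leg^{-1} where E_L(q,y) = Σ_{A,α} y^α_A ∂L/∂y^α_A − L. Let ψ = (ψ^i, ψ^A_α) : ℝ^k → ℝ^n × ℝ^{m·k} be smooth and satisfy the Hamilton equations on Lie algebroids: ∂ψ^i/∂t^A = Σ_α ρ^i_α(ψ(t)) ∂H/∂y^A_α(ψ(t)) for all i, A, and Σ_A ∂ψ^A_α/∂t^A = −( Σ_{β,δ,B} C^δ_{αβ}(ψ(t)) ψ^B_δ(t) ∂H/∂y^B_β(ψ(t)) + Σ_i ρ^i_α(ψ(t)) ∂H/∂q^i(ψ(t)) ) for each α. Then η := Leg^{-1} ∘ ψ = (η^i, η^α_A) satisfies ∂η^i/∂t^A = Σ_α ρ^i_α(η(t)) η^α_A(t) and, for each α: Σ_A ∂/∂t^A ( ∂L/∂y^α_A ∘ η )(t) = Σ_i ρ^i_α(η(t)) ∂L/∂q^i(η(t)) + Σ_{C,β,γ}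 η^β_C(t) C^γ_{βα}(η(t)) ∂L/∂y^γ_C(η(t)). -/

import Mathlib

open scoped BigOperators

noncomputable section

/-- The space `ℝ^n × ℝ^{m·k}` with coordinates `(qⁱ, yᵅ_A)`. -/
abbrev KPt (n m k : ℕ) : Type := (Fin n → ℝ) × (Fin m → Fin k → ℝ)

/-- Partial derivative of `f : ℝ^n → ℝ` in the `i`-th coordinate direction. -/
noncomputable def pQn {n : ℕ} (f : (Fin n → ℝ) → ℝ) (i : Fin n) (q : Fin n → ℝ) : ℝ :=
  fderiv ℝ f q (Pi.single i 1)

/-- `∂f/∂qⁱ` for `f : ℝ^n × ℝ^{m·k} → ℝ`. -/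
noncomputable def pQ {n m k : ℕ} (f : KPt n m k → ℝ) (i : Fin n) (p : KPt n m k) : ℝ :=
  fderiv ℝ f p ((Pi.single i 1 : Fin n → ℝ), (0 : Fin m → Fin k → ℝ))

/-- `∂f/∂yᵅ_A` for `f : ℝ^n × ℝ^{m·k} → ℝ`. -/
noncomputable def pY {n m k : ℕ} (f : KPt n m k → ℝ) (α : Fin m) (A : Fin k) (p : KPt n m k) : ℝ :=
  fderiv ℝ f p ((0 : Fin n → ℝ), (Pi.single α (Pi.single A 1) : Fin m → Fin k → ℝ))

/-- `∂f/∂t^A` for `f : ℝ^k → ℝ`. -/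
noncomputable def pT {k : ℕ} (f : (Fin k → ℝ) → ℝ) (A : Fin k) (t : Fin k → ℝ) : ℝ :=
  fderiv ℝ f t (Pi.single A 1)

/-- Regularity of a Lagrangian: the Hessian in the velocity variables is invertible
at every point. -/
def RegularL {n m k : ℕ} (L : KPt n m k → ℝ) : Prop :=
  ∀ p : KPt n m k,
    IsUnit (Matrix.of (fun a b : Fin m × Fin k => pY (pY L b.1 b.2) a.1 a.2 p) :
      Matrix (Fin m × Fin k) (Fin m × Fin k) ℝ)

/-- The Legendre transformation associated with a Lagrangian `L`. -/
noncomputable def Leg {n m k : ℕ} (L : KPt n m k → ℝ) (p : KPt n m k) : KPt n m k :=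
  (p.1, fun α A => pY L α A p)

/-- The Lagrangian energy `E_L`. -/
noncomputable def EnergyL {n m k : ℕ} (L : KPt n m k → ℝ) (p : KPt n m k) : ℝ :=
  (∑ A : Fin k, ∑ α : Fin m, p.2 α A * pY L α A p) - L p

lemma basis_decomp {n m k : ℕ} (v : KPt n m k) :
    v = (∑ i : Fin n, v.1 i • ((Pi.single i 1 : Fin n → ℝ), (0 : Fin m → Fin k → ℝ)))
      + ∑ α : Fin m, ∑ A : Fin k, v.2 α A •
          ((0 : Fin n → ℝ), (Pi.single α (Pi.single A 1) : Fin m → Fin k → ℝ)) := by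
  apply Prod.ext
  · simp only [Prod.fst_add, Prod.fst_sum, Prod.smul_fst, smul_zero, Finset.sum_const_zero,
      add_zero]
    funext j
    simp [Finset.sum_apply, Pi.single_apply, mul_ite]
  · simp only [Prod.snd_add, Prod.snd_sum, Prod.smul_snd, smul_zero, Finset.sum_const_zero,
      zero_add]
    funext β B
    simp [Finset.sum_apply, ite_apply, Pi.single_apply, Finset.sum_ite_eq, mul_ite]

lemma clm_decomp {n m k : ℕ} (D : KPt n m k →L[ℝ] ℝ) (v : KPt n m k) :
    D v = (∑ i : Fin n, v.1 i * D ((Pi.single i 1 : Fin n → ℝ), (0 : Fin m → Fin k → ℝ)))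
      + ∑ α : Fin m, ∑ A : Fin k, v.2 α A *
          D ((0 : Fin n → ℝ), (Pi.single α (Pi.single A 1) : Fin m → Fin k → ℝ)) := by
  conv_lhs => rw [basis_decomp v]
  simp only [map_add, map_sum, map_smul, smul_eq_mul]

lemma fderiv_decomp {n m k : ℕ} (f : KPt n m k → ℝ) (p v : KPt n m k) :
    fderiv ℝ f p v = (∑ i : Fin n, v.1 i * pQ f i p)
      + ∑ α : Fin m, ∑ A : Fin k, v.2 α A * pY f α A p :=
  clm_decomp (fderiv ℝ f p) v


noncomputable def ev2 {n m k : ℕ} (α : Fin m) (A : Fin k) : KPt n m k →L[ℝ] ℝ :=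
  ((ContinuousLinearMap.proj A).comp (ContinuousLinearMap.proj α)).comp
    (ContinuousLinearMap.snd ℝ (Fin n → ℝ) (Fin m → Fin k → ℝ))

@[simp] lemma ev2_apply {n m k : ℕ} (α : Fin m) (A : Fin k) (p : KPt n m k) :
    ev2 α A p = p.2 α A := rfl

lemma keyH {n m k : ℕ} (L : KPt n m k → ℝ) (hL : ContDiff ℝ (⊤ : ℕ∞) L)
    (G : KPt n m k → KPt n m k) (hG : ContDiff ℝ (⊤ : ℕ∞) G)
    (hLG : Function.RightInverse G (Leg L))
    (H : KPt n m k → ℝ) (hHdef : ∀ p, H p = EnergyL L (G p)) (p v : KPt n m k) :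
    fderiv ℝ H p v = (∑ A : Fin k, ∑ α : Fin m, (G p).2 α A * v.2 α A)
      - ∑ i : Fin n, v.1 i * pQ L i (G p) := by
  have hG1 : ∀ q, (G q).1 = q.1 := fun q => by
    have h := congrArg Prod.fst (hLG q); simpa [Leg] using h
  have hGY : ∀ q α A, pY L α A (G q) = q.2 α A := fun q α A => by
    have h := congrArg Prod.snd (hLG q)
    simp only [Leg] at h
    exact congrFun (congrFun h α) A
  set D := fderiv ℝ G p with hDdef
  have hD : HasFDerivAt G D p := (hG.differentiable (by simp) p).hasFDerivAt
  have hLd : HasFDerivAt L (fderiv ℝ L (G p)) (G p) :=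
    (hL.differentiable (by simp) (G p)).hasFDerivAt
  have hcomp : HasFDerivAt (fun q => L (G q)) ((fderiv ℝ L (G p)).comp D) p :=
    hLd.comp p hD
  have hterm : ∀ (α : Fin m) (A : Fin k), HasFDerivAt
      (fun q : KPt n m k => (G q).2 α A * q.2 α A)
      ((G p).2 α A • (ev2 α A) + p.2 α A • ((ev2 α A).comp D)) p := by
    intro α A
    exact HasFDerivAt.mul ((ev2 α A).hasFDerivAt.comp p hD) (ev2 α A).hasFDerivAt
  have hsum : HasFDerivAt
      (fun q : KPt n m k => ∑ A : Fin k, ∑ α : Fin m, (G q).2 α A * q.2 α A)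
      (∑ A : Fin k, ∑ α : Fin m, ((G p).2 α A • (ev2 α A) + p.2 α A • ((ev2 α A).comp D))) p :=
    HasFDerivAt.fun_sum fun A _ => HasFDerivAt.fun_sum fun α _ => hterm α A
  have hHfun : H = fun q : KPt n m k =>
      (∑ A : Fin k, ∑ α : Fin m, (G q).2 α A * q.2 α A) - L (G q) := by
    funext q
    rw [hHdef, EnergyL]
    congr 1
    exact Finset.sum_congr rfl fun A _ => Finset.sum_congr rfl fun α _ => by rw [hGY]
  have hH : HasFDerivAt H
      ((∑ A : Fin k, ∑ α : Fin m, ((G p).2 α A • (ev2 α A) + p.2 α A • ((ev2 α A).comp D)))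
        - (fderiv ℝ L (G p)).comp D) p := by
    rw [hHfun]; exact hsum.sub hcomp
  have hDv1 : (D v).1 = v.1 := by
    have h1 : HasFDerivAt (fun q : KPt n m k => (G q).1)
        ((ContinuousLinearMap.fst ℝ (Fin n → ℝ) (Fin m → Fin k → ℝ)).comp D) p :=
      (ContinuousLinearMap.fst ℝ (Fin n → ℝ) (Fin m → Fin k → ℝ)).hasFDerivAt.comp p hD
    have h2 : HasFDerivAt (fun q : KPt n m k => (G q).1)
        (ContinuousLinearMap.fst ℝ (Fin n → ℝ) (Fin m → Fin k → ℝ)) p := by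
      have : (fun q : KPt n m k => (G q).1) = fun q : KPt n m k => q.1 := funext hG1
      rw [this]
      exact (ContinuousLinearMap.fst ℝ (Fin n → ℝ) (Fin m → Fin k → ℝ)).hasFDerivAt
    have h3 := h1.unique h2
    exact congrArg (fun T : KPt n m k →L[ℝ] (Fin n → ℝ) => T v) h3
  rw [hH.fderiv]
  have hLGp : fderiv ℝ L (G p) (D v)
      = (∑ i : Fin n, v.1 i * pQ L i (G p))
        + ∑ A : Fin k, ∑ α : Fin m, p.2 α A * (D v).2 α A := by
    rw [fderiv_decomp, hDv1]
    congr 1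
    rw [Finset.sum_comm]
    exact Finset.sum_congr rfl fun A _ => Finset.sum_congr rfl fun α _ => by
      rw [hGY]; ring
  simp only [ContinuousLinearMap.sub_apply, ContinuousLinearMap.coe_sum',
    Finset.sum_apply, ContinuousLinearMap.add_apply, ContinuousLinearMap.coe_smul',
    Pi.smul_apply, ContinuousLinearMap.comp_apply, ev2_apply, smul_eq_mul, hLGp]
  simp only [Finset.sum_add_distrib]
  ring

lemma pYH {n m k : ℕ} (L : KPt n m k → ℝ) (hL : ContDiff ℝ (⊤ : ℕ∞) L)
    (G : KPt n m k → KPt n m k) (hG : ContDiff ℝ (⊤ : ℕ∞) G)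
    (hLG : Function.RightInverse G (Leg L))
    (H : KPt n m k → ℝ) (hHdef : ∀ p, H p = EnergyL L (G p))
    (α : Fin m) (A : Fin k) (p : KPt n m k) :
    pY H α A p = (G p).2 α A := by
  unfold pY
  rw [keyH L hL G hG hLG H hHdef]
  simp [Pi.single_apply, ite_apply, mul_ite, Finset.sum_ite_eq, Finset.sum_ite_eq']

lemma pQH {n m k : ℕ} (L : KPt n m k → ℝ) (hL : ContDiff ℝ (⊤ : ℕ∞) L)
    (G : KPt n m k → KPt n m k) (hG : ContDiff ℝ (⊤ : ℕ∞) G)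
    (hLG : Function.RightInverse G (Leg L))
    (H : KPt n m k → ℝ) (hHdef : ∀ p, H p = EnergyL L (G p))
    (i : Fin n) (p : KPt n m k) :
    pQ H i p = -(pQ L i (G p)) := by
  unfold pQ
  rw [keyH L hL G hG hLG H hHdef]
  simp [Pi.single_apply, ite_mul, Finset.sum_ite_eq, Finset.sum_ite_eq', pQ]

lemma tripleswap {m k : ℕ} (f : Fin m → Fin m → Fin k → ℝ) :
    ∑ β : Fin m, ∑ δ : Fin m, ∑ B : Fin k, f β δ B
      = ∑ B : Fin k, ∑ β : Fin m, ∑ δ : Fin m, f β δ B := by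
  calc ∑ β : Fin m, ∑ δ : Fin m, ∑ B : Fin k, f β δ B
      = ∑ β : Fin m, ∑ B : Fin k, ∑ δ : Fin m, f β δ B :=
        Finset.sum_congr rfl fun β _ => Finset.sum_comm
    _ = ∑ B : Fin k, ∑ β : Fin m, ∑ δ : Fin m, f β δ B := Finset.sum_comm

lemma alg {n m k : ℕ} (Cq : Fin m → Fin m → Fin m → ℝ)
    (hC : ∀ γ a b, Cq γ a b = -Cq γ b a)
    (ψ2 g : Fin m → Fin k → ℝ) (rv pv : Fin n → ℝ) (α : Fin m) :
    -((∑ β : Fin m, ∑ δ : Fin m, ∑ B : Fin k, Cq δ α β * ψ2 δ B * g β B)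
        + ∑ i : Fin n, rv i * (-(pv i)))
    = (∑ i : Fin n, rv i * pv i)
      + ∑ Cc : Fin k, ∑ β : Fin m, ∑ γ : Fin m, g β Cc * Cq γ β α * ψ2 γ Cc := by
  have h1 : ∑ i : Fin n, rv i * (-(pv i)) = -∑ i : Fin n, rv i * pv i := by
    simp [mul_neg]
  have h3 : (∑ Cc : Fin k, ∑ β : Fin m, ∑ γ : Fin m, g β Cc * Cq γ β α * ψ2 γ Cc)
      = ∑ Cc : Fin k, ∑ β : Fin m, ∑ γ : Fin m, -(Cq γ α β * ψ2 γ Cc * g β Cc) :=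
    Finset.sum_congr rfl fun Cc _ => Finset.sum_congr rfl fun β _ =>
      Finset.sum_congr rfl fun γ _ => by rw [hC γ β α]; ring
  rw [h1, tripleswap, h3, neg_add, neg_neg]
  simp only [Finset.sum_neg_distrib]
  ring

/-- Converse direction of the Lagrangian–Hamiltonian equivalence:
pulling back a solution of the Hamilton equations on Lie algebroids by the inverse
Legendre transformation yields a solution of the Euler–Lagrange equations. -/
theorem stmt10 {n m k : ℕ} (L : KPt n m k → ℝ) (hL : ContDiff ℝ (⊤ : ℕ∞) L)
    (ρ : Fin n → Fin m → (Fin n → ℝ) → ℝ) (C : Fin m → Fin m → Fin m → (Fin n → ℝ) → ℝ)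
    (hρ : ∀ i α, ContDiff ℝ (⊤ : ℕ∞) (ρ i α)) (hC : ∀ γ α β, ContDiff ℝ (⊤ : ℕ∞) (C γ α β))
    (hCanti : ∀ γ α β q, C γ α β q = - C γ β α q)
    (G : KPt n m k → KPt n m k) (hG : ContDiff ℝ (⊤ : ℕ∞) G)
    (hGL : Function.LeftInverse G (Leg L)) (hLG : Function.RightInverse G (Leg L))
    (H : KPt n m k → ℝ) (hHdef : ∀ p, H p = EnergyL L (G p))
    (ψ : (Fin k → ℝ) → KPt n m k) (hψ : ContDiff ℝ (⊤ : ℕ∞) ψ)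
    (hHam1 : ∀ (i : Fin n) (A : Fin k) (t : Fin k → ℝ),
      pT (fun s => (ψ s).1 i) A t = ∑ α : Fin m, ρ i α (ψ t).1 * pY H α A (ψ t))
    (hHam2 : ∀ (α : Fin m) (t : Fin k → ℝ),
      (∑ A : Fin k, pT (fun s => (ψ s).2 α A) A t)
      = -((∑ β : Fin m, ∑ δ : Fin m, ∑ B : Fin k,
            C δ α β (ψ t).1 * (ψ t).2 δ B * pY H β B (ψ t))
          + ∑ i : Fin n, ρ i α (ψ t).1 * pQ H i (ψ t)))
    (η : (Fin k → ℝ) → KPt n m k) (hηdef : ∀ t, η t = G (ψ t)) :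
    (∀ (i : Fin n) (A : Fin k) (t : Fin k → ℝ),
      pT (fun s => (η s).1 i) A t = ∑ α : Fin m, ρ i α (η t).1 * (η t).2 α A) ∧
    (∀ (α : Fin m) (t : Fin k → ℝ),
      (∑ A : Fin k, pT (fun s => pY L α A (η s)) A t)
      = (∑ i : Fin n, ρ i α (η t).1 * pQ L i (η t))
        + ∑ Cc : Fin k, ∑ β : Fin m, ∑ γ : Fin m,
            (η t).2 β Cc * C γ β α (η t).1 * pY L γ Cc (η t)) := by

  have hG1 : ∀ q, (G q).1 = q.1 := fun q => by
    have h := congrArg Prod.fst (hLG q); simpa [Leg] using h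
  have hGY : ∀ q α A, pY L α A (G q) = q.2 α A := fun q α A => by
    have h := congrArg Prod.snd (hLG q)
    simp only [Leg] at h
    exact congrFun (congrFun h α) A
  refine ⟨?_, ?_⟩
  · intro i A t
    have h1 : (fun s => (η s).1 i) = fun s => (ψ s).1 i :=
      funext fun s => by rw [hηdef, hG1]
    rw [h1, hHam1]
    refine Finset.sum_congr rfl fun α _ => ?_
    rw [pYH L hL G hG hLG H hHdef, hηdef, hG1]
  · intro α t
    have hL1 : ∑ A : Fin k, pT (fun s => pY L α A (η s)) A t
        = ∑ A : Fin k, pT (fun s => (ψ s).2 α A) A t :=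
      Finset.sum_congr rfl fun A _ => by
        have h2 : (fun s => pY L α A (η s)) = fun s => (ψ s).2 α A :=
          funext fun s => by rw [hηdef, hGY]
        rw [h2]
    rw [hL1, hHam2]
    simp only [pYH L hL G hG hLG H hHdef, pQH L hL G hG hLG H hHdef, hηdef, hG1, hGY]
    exact alg (fun γ a b => C γ a b (ψ t).1) (fun γ a b => hCanti γ a b (ψ t).1)
      ((ψ t).2) ((G (ψ t)).2) (fun i => ρ i α (ψ t).1) (fun i => pQ L i (G (ψ t))) α
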